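/- arXiv:1311.1876 — 2 statements merged into one kernel-verified Lean document; each statement's English description precedes it below -/
import Mathlib

section
/- Suppose B ≠ 0, Q > 0, N₀ ≥ 0, and assume condition (H2): e^{(2|C|+|F|)T} Γ̄² Θ̄₁Θ̄₂Θ̄₃ + e^{(2|C|+|F|)T} Γ̄ Θ̄₁Θ̄₄ + e^{|F|T} (B²/R) T Γ̄² Θ̄₃ < 1. Then the map 𝒯 : C([0,T];ℝ) → C([0,T];ℝ) has a unique fixed point, i.e. there exists a unique continuous function x̄ : [0,T] → ℝ with 𝒯x̄ = x̄. -/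
open Real Set

noncomputable section

/-- Bundle of the real model constants of the mean-field LQG game. -/
structure P where
  A : ℝ
  B : ℝ
  C : ℝ
  D : ℝ
  F : ℝ
  H : ℝ
  K : ℝ
  L : ℝ
  Q : ℝ
  R : ℝ
  S : ℝ
  eta : ℝ
  sig : ℝ
  N0 : ℝ
  T : ℝ
  x0 : ℝ

namespace P

variable (p : P)

/-- `a := A + σ²/2`. -/
def a : ℝ := p.A + p.sig ^ 2 / 2

/-- `λ := √(a² + B²Q/R)`. -/
def lam : ℝ := Real.sqrt (p.a ^ 2 + p.B ^ 2 * p.Q / p.R)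

/-- `β(t) := Q(e^{2λ(T−t)} − 1)/[(λ − a)e^{2λ(T−t)} + (λ + a)]`. -/
def beta (t : ℝ) : ℝ :=
  p.Q * (Real.exp (2 * p.lam * (p.T - t)) - 1) /
    ((p.lam - p.a) * Real.exp (2 * p.lam * (p.T - t)) + (p.lam + p.a))

/-- `𝔸(t) := A − (B²/R)β(t)`. -/
def AA (t : ℝ) : ℝ := p.A - p.B ^ 2 / p.R * p.beta t

/-- `Γₛᵗ := exp(∫ₛᵗ 𝔸(r) dr)`. -/
def Gam (s t : ℝ) : ℝ := Real.exp (∫ r in s..t, p.AA r)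

/-- `Γ̄ := exp(∫₀ᵀ |𝔸(r)| dr)`. -/
def GamBar : ℝ := Real.exp (∫ r in (0 : ℝ)..p.T, |p.AA r|)

/-- `Θ₆(s) := (BD/R)β(s) − H`. -/
def Th6 (s : ℝ) : ℝ := p.B * p.D / p.R * p.beta s - p.H

/-- `α(t) := −K e^{C(T−t)} Γₜᵀ + ∫ₜᵀ e^{C(v−t)} Γₜᵛ Θ₆(v) dv`. -/
def alpha (t : ℝ) : ℝ :=
  -p.K * Real.exp (p.C * (p.T - t)) * p.Gam t p.T +
    ∫ v in t..p.T, Real.exp (p.C * (v - t)) * p.Gam t v * p.Th6 v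

/-- `ζ(t) := −α(t)`. -/
def zeta (t : ℝ) : ℝ := -p.alpha t

/-- `ξ(t) := ∫ₜᵀ e^{2C(v−t)} [(BD/R − (B²/R)α(v))ζ(v) + D²/R − (BD/R)α(v)] dv`. -/
def xi (t : ℝ) : ℝ :=
  ∫ v in t..p.T, Real.exp (2 * p.C * (v - t)) *
    ((p.B * p.D / p.R - p.B ^ 2 / p.R * p.alpha v) * p.zeta v +
      p.D ^ 2 / p.R - p.B * p.D / p.R * p.alpha v)

/-- `Θ₁(s) := ((B²/R)α(s) − BD/R)·N₀/(1 + ξ(0)N₀)`. -/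
def Th1 (s : ℝ) : ℝ :=
  (p.B ^ 2 / p.R * p.alpha s - p.B * p.D / p.R) * p.N0 / (1 + p.xi 0 * p.N0)

/-- `Θ₂(r) := −((B²/R)ζ(r) + BD/R)`. -/
def Th2 (r : ℝ) : ℝ := -(p.B ^ 2 / p.R * p.zeta r + p.B * p.D / p.R)

/-- `Θ₃(v) := Fβ(v) − QS`. -/
def Th3 (v : ℝ) : ℝ := p.F * p.beta v - p.Q * p.S

/-- `Θ₄(r) := Fζ(r) + L`. -/
def Th4 (r : ℝ) : ℝ := p.F * p.zeta r + p.L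

/-- `Θ̄₁ := ∫₀ᵀ |Θ₁(s)| ds`. -/
def ThBar1 : ℝ := ∫ s in (0 : ℝ)..p.T, |p.Th1 s|

/-- `Θ̄₂ := ∫₀ᵀ |Θ₂(s)| ds`. -/
def ThBar2 : ℝ := ∫ s in (0 : ℝ)..p.T, |p.Th2 s|

/-- `Θ̄₃ := ∫₀ᵀ |Θ₃(s)| ds`. -/
def ThBar3 : ℝ := ∫ s in (0 : ℝ)..p.T, |p.Th3 s|

/-- `Θ̄₄ := ∫₀ᵀ |Θ₄(s)| ds`. -/
def ThBar4 : ℝ := ∫ s in (0 : ℝ)..p.T, |p.Th4 s|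

/-- `γ[x̄](t) := ∫ₜᵀ Γₜᵛ (Θ₃(v)x̄(v) − Qη) dv`. -/
def gam (xb : ℝ → ℝ) (t : ℝ) : ℝ :=
  ∫ v in t..p.T, p.Gam t v * (p.Th3 v * xb v - p.Q * p.eta)

/-- `τ[x̄](t)`, the second force-rate function. -/
def tau (xb : ℝ → ℝ) (t : ℝ) : ℝ :=
  (∫ r in t..p.T, Real.exp (p.C * (r - t)) * p.Th2 r *
      (∫ v in r..p.T, p.Gam r v * (p.Th3 v * xb v - p.Q * p.eta))) +
    ∫ r in t..p.T, Real.exp (p.C * (r - t)) * p.Th4 r * xb r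

/-- The fixed-point map `𝒯` of the consistency condition system. -/
def Tmap (xb : ℝ → ℝ) (t : ℝ) : ℝ :=
  p.Gam 0 t * Real.exp (p.F * t) * p.x0 +
    ∫ s in (0 : ℝ)..t, p.Gam s t * Real.exp (p.F * (t - s)) *
      ((p.zeta 0 * p.x0 + p.tau xb 0) * p.Th1 s * Real.exp (p.C * s) -
        p.B ^ 2 / p.R * p.gam xb s)

end P

namespace P

variable (p : P)

section Hyps

variable (hQ : 0 < p.Q) (hR : 0 < p.R) (hB : p.B ≠ 0)
include hQ hR hB

lemma abs_a_lt_lam : |p.a| < p.lam := by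
  have hpos : 0 < p.B ^ 2 * p.Q / p.R := by
    have hB2 : 0 < p.B ^ 2 := by positivity
    positivity
  have h1 : |p.a| = Real.sqrt (p.a ^ 2) := (Real.sqrt_sq_eq_abs _).symm
  rw [h1, lam]
  exact Real.sqrt_lt_sqrt (sq_nonneg _) (by linarith)

lemma den_pos (t : ℝ) :
    0 < (p.lam - p.a) * Real.exp (2 * p.lam * (p.T - t)) + (p.lam + p.a) := by
  have h := p.abs_a_lt_lam hQ hR hB
  obtain ⟨h1, h2⟩ := abs_lt.mp h
  have he := Real.exp_pos (2 * p.lam * (p.T - t))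
  nlinarith

lemma cont_beta : Continuous p.beta := by
  unfold beta
  exact (continuous_const.mul (by fun_prop)).div (by fun_prop)
    (fun t => (p.den_pos hQ hR hB t).ne')

lemma cont_AA : Continuous p.AA :=
  continuous_const.sub (continuous_const.mul (p.cont_beta hQ hR hB))

lemma intInt_AA (a b : ℝ) : IntervalIntegrable p.AA MeasureTheory.volume a b :=
  (p.cont_AA hQ hR hB).intervalIntegrable a b

end Hyps

/-- primitive of 𝔸 -/
def gInt (t : ℝ) : ℝ := ∫ r in (0:ℝ)..t, p.AA r

section Hyps2
variable (hQ : 0 < p.Q) (hR : 0 < p.R) (hB : p.B ≠ 0)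
include hQ hR hB

lemma cont_gInt : Continuous p.gInt :=
  intervalIntegral.continuous_primitive (p.intInt_AA hQ hR hB) 0

lemma Gam_eq (s t : ℝ) : p.Gam s t = Real.exp (p.gInt t - p.gInt s) := by
  unfold Gam gInt
  congr 1
  rw [← intervalIntegral.integral_interval_sub_left (p.intInt_AA hQ hR hB 0 t)
    (p.intInt_AA hQ hR hB 0 s)]

end Hyps2

end P
lemma cont_int_to (T : ℝ) {h : ℝ → ℝ} (hh : Continuous h) :
    Continuous fun t => ∫ v in t..T, h v := by
  have e : (fun t => ∫ v in t..T, h v)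
      = fun t => (∫ v in (0:ℝ)..T, h v) - ∫ v in (0:ℝ)..t, h v := by
    funext t
    rw [← intervalIntegral.integral_interval_sub_left (hh.intervalIntegrable 0 T)
      (hh.intervalIntegrable 0 t)]
  rw [e]
  exact continuous_const.sub
    (intervalIntegral.continuous_primitive (fun a b => hh.intervalIntegrable a b) 0)

namespace P

variable (p : P)

section Hyps3
variable (hQ : 0 < p.Q) (hR : 0 < p.R) (hB : p.B ≠ 0)
include hQ hR hB

lemma cont_Th6 : Continuous p.Th6 :=
  (continuous_const.mul (p.cont_beta hQ hR hB)).sub continuous_const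

lemma cont_Th3 : Continuous p.Th3 :=
  (continuous_const.mul (p.cont_beta hQ hR hB)).sub continuous_const

lemma alpha_eq (t : ℝ) :
    p.alpha t = Real.exp (-(p.C * t + p.gInt t)) *
      (-p.K * Real.exp (p.C * p.T + p.gInt p.T) +
        ∫ v in t..p.T, Real.exp (p.C * v + p.gInt v) * p.Th6 v) := by
  have key : ∀ v : ℝ, Real.exp (p.C * (v - t)) * p.Gam t v
      = Real.exp (-(p.C * t + p.gInt t)) * Real.exp (p.C * v + p.gInt v) := by
    intro v
    rw [p.Gam_eq hQ hR hB, ← Real.exp_add, ← Real.exp_add]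
    congr 1; ring
  unfold alpha
  rw [mul_add, ← intervalIntegral.integral_const_mul]
  congr 1
  · linear_combination (-p.K) * key p.T
  · apply intervalIntegral.integral_congr
    intro v _
    linear_combination (p.Th6 v) * key v

lemma cont_alpha : Continuous p.alpha := by
  have e : p.alpha = fun t => Real.exp (-(p.C * t + p.gInt t)) *
      (-p.K * Real.exp (p.C * p.T + p.gInt p.T) +
        ∫ v in t..p.T, Real.exp (p.C * v + p.gInt v) * p.Th6 v) :=
    funext (p.alpha_eq hQ hR hB)
  rw [e]
  have hg := p.cont_gInt hQ hR hB
  exact (Real.continuous_exp.comp (by fun_prop)).mul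
    (continuous_const.add (cont_int_to p.T
      ((Real.continuous_exp.comp (by fun_prop)).mul (p.cont_Th6 hQ hR hB))))

lemma cont_zeta : Continuous p.zeta := (p.cont_alpha hQ hR hB).neg

lemma cont_Th1 : Continuous p.Th1 := by
  unfold Th1
  exact (((continuous_const.mul (p.cont_alpha hQ hR hB)).sub continuous_const).mul
    continuous_const).div_const _

lemma cont_Th2 : Continuous p.Th2 := by
  unfold Th2
  exact ((continuous_const.mul (p.cont_zeta hQ hR hB)).add continuous_const).neg

lemma cont_Th4 : Continuous p.Th4 := by
  unfold Th4
  exact (continuous_const.mul (p.cont_zeta hQ hR hB)).add continuous_const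

lemma gam_eq (xb : ℝ → ℝ) (s : ℝ) :
    p.gam xb s = Real.exp (-p.gInt s) *
      ∫ v in s..p.T, Real.exp (p.gInt v) * (p.Th3 v * xb v - p.Q * p.eta) := by
  have key : ∀ v : ℝ, p.Gam s v = Real.exp (-p.gInt s) * Real.exp (p.gInt v) := by
    intro v
    rw [p.Gam_eq hQ hR hB, ← Real.exp_add]
    congr 1; ring
  unfold gam
  rw [← intervalIntegral.integral_const_mul]
  apply intervalIntegral.integral_congr
  intro v _
  linear_combination (p.Th3 v * xb v - p.Q * p.eta) * key v

lemma cont_gam {xb : ℝ → ℝ} (hxb : Continuous xb) : Continuous (p.gam xb) := by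
  have e : p.gam xb = fun s => Real.exp (-p.gInt s) *
      ∫ v in s..p.T, Real.exp (p.gInt v) * (p.Th3 v * xb v - p.Q * p.eta) :=
    funext (p.gam_eq hQ hR hB xb)
  rw [e]
  have hg := p.cont_gInt hQ hR hB
  exact (Real.continuous_exp.comp (by fun_prop)).mul
    (cont_int_to p.T ((Real.continuous_exp.comp hg).mul
      (((p.cont_Th3 hQ hR hB).mul hxb).sub continuous_const)))

omit hQ hR hB in
lemma tau_eq (xb : ℝ → ℝ) (t : ℝ) :
    p.tau xb t = (∫ r in t..p.T, Real.exp (p.C * (r - t)) * p.Th2 r * p.gam xb r) +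
      ∫ r in t..p.T, Real.exp (p.C * (r - t)) * p.Th4 r * xb r := rfl

lemma Tmap_eq (xb : ℝ → ℝ) (t : ℝ) :
    p.Tmap xb t = Real.exp (p.gInt t + p.F * t) *
      (p.x0 + ∫ s in (0:ℝ)..t, Real.exp (-(p.gInt s + p.F * s)) *
        ((p.zeta 0 * p.x0 + p.tau xb 0) * p.Th1 s * Real.exp (p.C * s) -
          p.B ^ 2 / p.R * p.gam xb s)) := by
  have g0 : p.gInt 0 = 0 := intervalIntegral.integral_same
  have key : ∀ s : ℝ, p.Gam s t * Real.exp (p.F * (t - s))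
      = Real.exp (p.gInt t + p.F * t) * Real.exp (-(p.gInt s + p.F * s)) := by
    intro s
    rw [p.Gam_eq hQ hR hB, ← Real.exp_add, ← Real.exp_add]
    congr 1; ring
  unfold Tmap
  rw [mul_add, ← intervalIntegral.integral_const_mul]
  congr 1
  · have k0 := key 0
    rw [g0] at k0
    have : Real.exp (p.F * (t - 0)) = Real.exp (p.F * t) := by norm_num
    rw [this] at k0
    have h0 : Real.exp (-(0 + p.F * 0)) = 1 := by norm_num
    rw [h0, mul_one] at k0
    linear_combination p.x0 * k0
  · apply intervalIntegral.integral_congr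
    intro s _
    linear_combination ((p.zeta 0 * p.x0 + p.tau xb 0) * p.Th1 s * Real.exp (p.C * s) -
      p.B ^ 2 / p.R * p.gam xb s) * key s

lemma cont_Tmap {xb : ℝ → ℝ} (hxb : Continuous xb) : Continuous (p.Tmap xb) := by
  have e : p.Tmap xb = fun t => Real.exp (p.gInt t + p.F * t) *
      (p.x0 + ∫ s in (0:ℝ)..t, Real.exp (-(p.gInt s + p.F * s)) *
        ((p.zeta 0 * p.x0 + p.tau xb 0) * p.Th1 s * Real.exp (p.C * s) -
          p.B ^ 2 / p.R * p.gam xb s)) := funext (p.Tmap_eq hQ hR hB xb)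
  rw [e]
  have hg := p.cont_gInt hQ hR hB
  have hint : Continuous fun s => Real.exp (-(p.gInt s + p.F * s)) *
      ((p.zeta 0 * p.x0 + p.tau xb 0) * p.Th1 s * Real.exp (p.C * s) -
        p.B ^ 2 / p.R * p.gam xb s) := by
    apply (Real.continuous_exp.comp (by fun_prop)).mul
    exact (((continuous_const.mul (p.cont_Th1 hQ hR hB)).mul
      (Real.continuous_exp.comp (by fun_prop))).sub
      (continuous_const.mul (p.cont_gam hQ hR hB hxb)))
  exact (Real.continuous_exp.comp (by fun_prop)).mul
    (continuous_const.add (intervalIntegral.continuous_primitive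
      (fun a b => hint.intervalIntegrable a b) 0))

end Hyps3

end P
lemma abs_mul3_le {a b c A B C : ℝ} (ha : |a| ≤ A) (hb : |b| ≤ B) (hc : |c| ≤ C) :
    |a * b * c| ≤ A * B * C := by
  rw [abs_mul, abs_mul]
  have hA : 0 ≤ A := (abs_nonneg a).trans ha
  have hB : 0 ≤ B := (abs_nonneg b).trans hb
  exact mul_le_mul (mul_le_mul ha hb (abs_nonneg b) hA) hc (abs_nonneg c) (mul_nonneg hA hB)

lemma abs_exp_le {x y : ℝ} (h : x ≤ y) : |Real.exp x| ≤ Real.exp y := by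
  rw [abs_of_pos (Real.exp_pos x)]
  exact Real.exp_le_exp.mpr h

namespace P

variable (p : P)

lemma Gam_pos (s t : ℝ) : 0 < p.Gam s t := Real.exp_pos _

lemma GamBar_pos : 0 < p.GamBar := Real.exp_pos _

section Hyps4
variable (hT : 0 < p.T) (hQ : 0 < p.Q) (hR : 0 < p.R) (hB : p.B ≠ 0)
include hT hQ hR hB

lemma Gam_le {s t : ℝ} (hs : s ∈ Set.Icc 0 p.T) (ht : t ∈ Set.Icc 0 p.T) :
    p.Gam s t ≤ p.GamBar := by
  unfold Gam GamBar
  apply Real.exp_le_exp.mpr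
  have h1 : (∫ r in s..t, p.AA r) ≤ |∫ r in s..t, p.AA r| := le_abs_self _
  have h2 : |∫ r in s..t, p.AA r| ≤ |(∫ r in s..t, |p.AA r|)| := by
    have h := intervalIntegral.norm_integral_le_abs_integral_norm
      (f := p.AA) (a := s) (b := t) (μ := MeasureTheory.volume)
    simpa [Real.norm_eq_abs] using h
  have hsub : Set.uIoc s t ⊆ Set.uIoc 0 p.T := by
    rw [Set.uIoc_of_le hT.le]
    exact Set.Ioc_subset_Ioc (le_min hs.1 ht.1) (max_le hs.2 ht.2)
  have h3 : |(∫ r in s..t, |p.AA r|)| ≤ |(∫ r in (0:ℝ)..p.T, |p.AA r|)| :=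
    intervalIntegral.abs_integral_mono_interval hsub
      (Filter.Eventually.of_forall fun x => abs_nonneg _)
      (((p.cont_AA hQ hR hB).abs).intervalIntegrable 0 p.T)
  have h4 : |(∫ r in (0:ℝ)..p.T, |p.AA r|)| = ∫ r in (0:ℝ)..p.T, |p.AA r| :=
    abs_of_nonneg (intervalIntegral.integral_nonneg hT.le fun u _ => abs_nonneg _)
  linarith

lemma abs_Gam_le {s t : ℝ} (hs : s ∈ Set.Icc 0 p.T) (ht : t ∈ Set.Icc 0 p.T) :
    |p.Gam s t| ≤ p.GamBar := by
  rw [abs_of_pos (p.Gam_pos s t)]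
  exact p.Gam_le hT hQ hR hB hs ht

omit hT hQ hR hB in
lemma intAbs_le (hT : 0 < p.T) {f : ℝ → ℝ} (hf : Continuous f) {s : ℝ}
    (hs : s ∈ Set.Icc 0 p.T) :
    (∫ v in s..p.T, |f v|) ≤ ∫ v in (0:ℝ)..p.T, |f v| :=
  intervalIntegral.integral_mono_interval hs.1 hs.2 le_rfl
    (Filter.Eventually.of_forall fun x => abs_nonneg _)
    (hf.abs.intervalIntegrable 0 p.T)

lemma ThBar1_nonneg : 0 ≤ p.ThBar1 :=
  intervalIntegral.integral_nonneg hT.le fun u _ => abs_nonneg _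
lemma ThBar2_nonneg : 0 ≤ p.ThBar2 :=
  intervalIntegral.integral_nonneg hT.le fun u _ => abs_nonneg _
lemma ThBar3_nonneg : 0 ≤ p.ThBar3 :=
  intervalIntegral.integral_nonneg hT.le fun u _ => abs_nonneg _
lemma ThBar4_nonneg : 0 ≤ p.ThBar4 :=
  intervalIntegral.integral_nonneg hT.le fun u _ => abs_nonneg _

omit hT in
lemma cont_Gam_right (s : ℝ) : Continuous (p.Gam s) := by
  have e : p.Gam s = fun t => Real.exp (p.gInt t - p.gInt s) :=
    funext fun t => p.Gam_eq hQ hR hB s t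
  rw [e]
  have hg := p.cont_gInt hQ hR hB
  fun_prop

lemma gam_diff {x1 x2 : ℝ → ℝ} (h1 : Continuous x1) (h2 : Continuous x2)
    {d : ℝ} (hd0 : 0 ≤ d) (hd : ∀ v ∈ Set.Icc 0 p.T, |x1 v - x2 v| ≤ d)
    {s : ℝ} (hs : s ∈ Set.Icc 0 p.T) :
    |p.gam x1 s - p.gam x2 s| ≤ p.GamBar * p.ThBar3 * d := by
  have hc3 := p.cont_Th3 hQ hR hB
  have hcG : Continuous (p.Gam s) := p.cont_Gam_right hQ hR hB s
  have hi1 : IntervalIntegrable (fun v => p.Gam s v * (p.Th3 v * x1 v - p.Q * p.eta))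
      MeasureTheory.volume s p.T := (hcG.mul ((hc3.mul h1).sub continuous_const)).intervalIntegrable _ _
  have hi2 : IntervalIntegrable (fun v => p.Gam s v * (p.Th3 v * x2 v - p.Q * p.eta))
      MeasureTheory.volume s p.T := (hcG.mul ((hc3.mul h2).sub continuous_const)).intervalIntegrable _ _
  have hsplit : p.gam x1 s - p.gam x2 s
      = ∫ v in s..p.T, p.Gam s v * p.Th3 v * (x1 v - x2 v) := by
    unfold gam
    rw [← intervalIntegral.integral_sub hi1 hi2]
    apply intervalIntegral.integral_congr
    intro v _
    ring
  rw [hsplit]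
  have hint : Continuous fun v => p.Gam s v * p.Th3 v * (x1 v - x2 v) := (hcG.mul hc3).mul (h1.sub h2)
  calc |∫ v in s..p.T, p.Gam s v * p.Th3 v * (x1 v - x2 v)|
      ≤ ∫ v in s..p.T, |p.Gam s v * p.Th3 v * (x1 v - x2 v)| :=
        intervalIntegral.abs_integral_le_integral_abs hs.2
    _ ≤ ∫ v in s..p.T, (p.GamBar * d) * |p.Th3 v| := by
        apply intervalIntegral.integral_mono_on hs.2
          (hint.abs.intervalIntegrable _ _)
          ((continuous_const.mul hc3.abs).intervalIntegrable _ _)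
        intro v hv
        have hv' : v ∈ Set.Icc 0 p.T := ⟨hs.1.trans hv.1, hv.2⟩
        calc |p.Gam s v * p.Th3 v * (x1 v - x2 v)|
            ≤ p.GamBar * |p.Th3 v| * d :=
              abs_mul3_le (p.abs_Gam_le hT hQ hR hB hs hv') le_rfl (hd v hv')
          _ = (p.GamBar * d) * |p.Th3 v| := by ring
    _ = (p.GamBar * d) * ∫ v in s..p.T, |p.Th3 v| := intervalIntegral.integral_const_mul _ _
    _ ≤ (p.GamBar * d) * p.ThBar3 := by
        exact mul_le_mul_of_nonneg_left (p.intAbs_le hT hc3 hs)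
          (mul_nonneg (p.GamBar_pos).le hd0)
    _ = p.GamBar * p.ThBar3 * d := by ring

end Hyps4

end P
namespace P

variable (p : P)

lemma gam_congr {x1 x2 : ℝ → ℝ} (hx : Set.EqOn x1 x2 (Set.Icc 0 p.T)) {s : ℝ}
    (hs : s ∈ Set.Icc 0 p.T) : p.gam x1 s = p.gam x2 s := by
  unfold gam
  apply intervalIntegral.integral_congr
  intro v hv
  rw [Set.uIcc_of_le hs.2] at hv
  dsimp only
  rw [hx ⟨hs.1.trans hv.1, hv.2⟩]

lemma tau_congr (hT : 0 < p.T) {x1 x2 : ℝ → ℝ} (hx : Set.EqOn x1 x2 (Set.Icc 0 p.T)) :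
    p.tau x1 0 = p.tau x2 0 := by
  rw [p.tau_eq x1 0, p.tau_eq x2 0]
  congr 1
  · apply intervalIntegral.integral_congr
    intro r hr
    rw [Set.uIcc_of_le hT.le] at hr
    dsimp only
    rw [p.gam_congr hx hr]
  · apply intervalIntegral.integral_congr
    intro r hr
    rw [Set.uIcc_of_le hT.le] at hr
    dsimp only
    rw [hx hr]

lemma Tmap_congr (hT : 0 < p.T) {x1 x2 : ℝ → ℝ} (hx : Set.EqOn x1 x2 (Set.Icc 0 p.T))
    {t : ℝ} (ht : t ∈ Set.Icc 0 p.T) : p.Tmap x1 t = p.Tmap x2 t := by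
  unfold Tmap
  congr 1
  apply intervalIntegral.integral_congr
  intro s hs
  rw [Set.uIcc_of_le ht.1] at hs
  have hs' : s ∈ Set.Icc 0 p.T := ⟨hs.1, hs.2.trans ht.2⟩
  dsimp only
  rw [p.tau_congr hT hx, p.gam_congr hx hs']

section Hyps5
variable (hT : 0 < p.T) (hQ : 0 < p.Q) (hR : 0 < p.R) (hB : p.B ≠ 0)
include hT hQ hR hB

omit hT in
lemma cont_Gam_left (t : ℝ) : Continuous fun s => p.Gam s t := by
  have e : (fun s => p.Gam s t) = fun s => Real.exp (p.gInt t - p.gInt s) :=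
    funext fun s => p.Gam_eq hQ hR hB s t
  rw [e]
  have hg := p.cont_gInt hQ hR hB
  fun_prop

lemma tau_diff {x1 x2 : ℝ → ℝ} (h1 : Continuous x1) (h2 : Continuous x2)
    {d : ℝ} (hd0 : 0 ≤ d) (hd : ∀ v ∈ Set.Icc 0 p.T, |x1 v - x2 v| ≤ d) :
    |p.tau x1 0 - p.tau x2 0| ≤
      Real.exp (|p.C| * p.T) * (p.GamBar * p.ThBar3 * p.ThBar2 + p.ThBar4) * d := by
  have hc2 := p.cont_Th2 hQ hR hB
  have hc4 := p.cont_Th4 hQ hR hB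
  have hg1 := p.cont_gam hQ hR hB h1
  have hg2 := p.cont_gam hQ hR hB h2
  have hce : Continuous fun r : ℝ => Real.exp (p.C * (r - 0)) := by fun_prop
  have hCb : ∀ r ∈ Set.Icc 0 p.T, p.C * (r - 0) ≤ |p.C| * p.T := by
    intro r hr
    calc p.C * (r - 0) ≤ |p.C * (r - 0)| := le_abs_self _
      _ = |p.C| * r := by rw [abs_mul, sub_zero, abs_of_nonneg hr.1]
      _ ≤ |p.C| * p.T := mul_le_mul_of_nonneg_left hr.2 (abs_nonneg _)
  rw [p.tau_eq x1 0, p.tau_eq x2 0]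
  have hA : ((∫ r in (0:ℝ)..p.T, Real.exp (p.C * (r - 0)) * p.Th2 r * p.gam x1 r) -
      ∫ r in (0:ℝ)..p.T, Real.exp (p.C * (r - 0)) * p.Th2 r * p.gam x2 r)
      = ∫ r in (0:ℝ)..p.T, Real.exp (p.C * (r - 0)) * p.Th2 r * (p.gam x1 r - p.gam x2 r) := by
    rw [← intervalIntegral.integral_sub (f := fun r => Real.exp (p.C * (r - 0)) * p.Th2 r * p.gam x1 r)
      (g := fun r => Real.exp (p.C * (r - 0)) * p.Th2 r * p.gam x2 r) (((hce.mul hc2).mul hg1).intervalIntegrable _ _)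
      (((hce.mul hc2).mul hg2).intervalIntegrable _ _)]
    apply intervalIntegral.integral_congr
    intro r _; ring
  have hB' : ((∫ r in (0:ℝ)..p.T, Real.exp (p.C * (r - 0)) * p.Th4 r * x1 r) -
      ∫ r in (0:ℝ)..p.T, Real.exp (p.C * (r - 0)) * p.Th4 r * x2 r)
      = ∫ r in (0:ℝ)..p.T, Real.exp (p.C * (r - 0)) * p.Th4 r * (x1 r - x2 r) := by
    rw [← intervalIntegral.integral_sub (f := fun r => Real.exp (p.C * (r - 0)) * p.Th4 r * x1 r)
      (g := fun r => Real.exp (p.C * (r - 0)) * p.Th4 r * x2 r) (((hce.mul hc4).mul h1).intervalIntegrable _ _)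
      (((hce.mul hc4).mul h2).intervalIntegrable _ _)]
    apply intervalIntegral.integral_congr
    intro r _; ring
  have hAb : |∫ r in (0:ℝ)..p.T, Real.exp (p.C * (r - 0)) * p.Th2 r * (p.gam x1 r - p.gam x2 r)|
      ≤ Real.exp (|p.C| * p.T) * (p.GamBar * p.ThBar3 * d) * p.ThBar2 := by
    calc |∫ r in (0:ℝ)..p.T, Real.exp (p.C * (r - 0)) * p.Th2 r * (p.gam x1 r - p.gam x2 r)|
        ≤ ∫ r in (0:ℝ)..p.T, |Real.exp (p.C * (r - 0)) * p.Th2 r * (p.gam x1 r - p.gam x2 r)| :=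
          intervalIntegral.abs_integral_le_integral_abs hT.le
      _ ≤ ∫ r in (0:ℝ)..p.T, (Real.exp (|p.C| * p.T) * (p.GamBar * p.ThBar3 * d)) * |p.Th2 r| := by
          apply intervalIntegral.integral_mono_on hT.le
            (((hce.mul hc2).mul (hg1.sub hg2)).abs.intervalIntegrable _ _)
            ((continuous_const.mul hc2.abs).intervalIntegrable _ _)
          intro r hr
          calc |Real.exp (p.C * (r - 0)) * p.Th2 r * (p.gam x1 r - p.gam x2 r)|
              ≤ Real.exp (|p.C| * p.T) * |p.Th2 r| * (p.GamBar * p.ThBar3 * d) :=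
                abs_mul3_le (abs_exp_le (hCb r hr)) le_rfl
                  (p.gam_diff hT hQ hR hB h1 h2 hd0 hd hr)
            _ = (Real.exp (|p.C| * p.T) * (p.GamBar * p.ThBar3 * d)) * |p.Th2 r| := by ring
      _ = (Real.exp (|p.C| * p.T) * (p.GamBar * p.ThBar3 * d)) * p.ThBar2 :=
          intervalIntegral.integral_const_mul _ _
  have hBb : |∫ r in (0:ℝ)..p.T, Real.exp (p.C * (r - 0)) * p.Th4 r * (x1 r - x2 r)|
      ≤ Real.exp (|p.C| * p.T) * d * p.ThBar4 := by
    calc |∫ r in (0:ℝ)..p.T, Real.exp (p.C * (r - 0)) * p.Th4 r * (x1 r - x2 r)|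
        ≤ ∫ r in (0:ℝ)..p.T, |Real.exp (p.C * (r - 0)) * p.Th4 r * (x1 r - x2 r)| :=
          intervalIntegral.abs_integral_le_integral_abs hT.le
      _ ≤ ∫ r in (0:ℝ)..p.T, (Real.exp (|p.C| * p.T) * d) * |p.Th4 r| := by
          apply intervalIntegral.integral_mono_on hT.le
            (((hce.mul hc4).mul (h1.sub h2)).abs.intervalIntegrable _ _)
            ((continuous_const.mul hc4.abs).intervalIntegrable _ _)
          intro r hr
          calc |Real.exp (p.C * (r - 0)) * p.Th4 r * (x1 r - x2 r)|
              ≤ Real.exp (|p.C| * p.T) * |p.Th4 r| * d :=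
                abs_mul3_le (abs_exp_le (hCb r hr)) le_rfl (hd r hr)
            _ = (Real.exp (|p.C| * p.T) * d) * |p.Th4 r| := by ring
      _ = (Real.exp (|p.C| * p.T) * d) * p.ThBar4 :=
          intervalIntegral.integral_const_mul _ _
  set A1 := ∫ r in (0:ℝ)..p.T, Real.exp (p.C * (r - 0)) * p.Th2 r * p.gam x1 r with hA1
  set A2 := ∫ r in (0:ℝ)..p.T, Real.exp (p.C * (r - 0)) * p.Th4 r * x1 r with hA2
  set B1 := ∫ r in (0:ℝ)..p.T, Real.exp (p.C * (r - 0)) * p.Th2 r * p.gam x2 r with hB1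
  set B2 := ∫ r in (0:ℝ)..p.T, Real.exp (p.C * (r - 0)) * p.Th4 r * x2 r with hB2
  calc |A1 + A2 - (B1 + B2)| = |(A1 - B1) + (A2 - B2)| := by rw [show A1 + A2 - (B1 + B2) = (A1 - B1) + (A2 - B2) by ring]
    _ ≤ |A1 - B1| + |A2 - B2| := abs_add_le _ _
    _ ≤ Real.exp (|p.C| * p.T) * (p.GamBar * p.ThBar3 * d) * p.ThBar2 +
        Real.exp (|p.C| * p.T) * d * p.ThBar4 := by
        rw [hA, hB']
        exact add_le_add hAb hBb
    _ = Real.exp (|p.C| * p.T) * (p.GamBar * p.ThBar3 * p.ThBar2 + p.ThBar4) * d := by ring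

end Hyps5

end P
namespace P

variable (p : P)

section Hyps6
variable (hT : 0 < p.T) (hQ : 0 < p.Q) (hR : 0 < p.R) (hB : p.B ≠ 0)
include hT hQ hR hB

lemma Tmap_diff {x1 x2 : ℝ → ℝ} (h1 : Continuous x1) (h2 : Continuous x2)
    {d : ℝ} (hd0 : 0 ≤ d) (hd : ∀ v ∈ Set.Icc 0 p.T, |x1 v - x2 v| ≤ d)
    {t : ℝ} (ht : t ∈ Set.Icc 0 p.T) :
    |p.Tmap x1 t - p.Tmap x2 t| ≤
      (Real.exp ((2 * |p.C| + |p.F|) * p.T) * p.GamBar ^ 2 * p.ThBar1 * p.ThBar2 * p.ThBar3 +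
        Real.exp ((2 * |p.C| + |p.F|) * p.T) * p.GamBar * p.ThBar1 * p.ThBar4 +
        Real.exp (|p.F| * p.T) * (p.B ^ 2 / p.R) * p.T * p.GamBar ^ 2 * p.ThBar3) * d := by
  have hc1 := p.cont_Th1 hQ hR hB
  have hg1 := p.cont_gam hQ hR hB h1
  have hg2 := p.cont_gam hQ hR hB h2
  have hcGl := p.cont_Gam_left hQ hR hB t
  have hBR : (0:ℝ) ≤ p.B ^ 2 / p.R := div_nonneg (sq_nonneg _) hR.le
  have hGB := p.GamBar_pos
  have hT1 := p.ThBar1_nonneg hT hQ hR hB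
  have hT2 := p.ThBar2_nonneg hT hQ hR hB
  have hT3 := p.ThBar3_nonneg hT hQ hR hB
  have hT4 := p.ThBar4_nonneg hT hQ hR hB
  set Dt : ℝ := Real.exp (|p.C| * p.T) * (p.GamBar * p.ThBar3 * p.ThBar2 + p.ThBar4) * d with hDt
  have hDt0 : 0 ≤ Dt := by
    apply mul_nonneg (mul_nonneg (Real.exp_pos _).le _) hd0
    have := mul_nonneg (mul_nonneg hGB.le hT3) hT2
    linarith
  have htaub : |p.tau x1 0 - p.tau x2 0| ≤ Dt := p.tau_diff hT hQ hR hB h1 h2 hd0 hd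
  set Dg : ℝ := p.GamBar * p.ThBar3 * d with hDg
  have hDg0 : 0 ≤ Dg := mul_nonneg (mul_nonneg hGB.le hT3) hd0
  set E1 : ℝ := p.GamBar * Real.exp (|p.F| * p.T) * (Real.exp (|p.C| * p.T) * Dt) with hE1
  set E2 : ℝ := p.GamBar * Real.exp (|p.F| * p.T) * (p.B ^ 2 / p.R * Dg) with hE2
  have hE10 : 0 ≤ E1 := by positivity
  have hE20 : 0 ≤ E2 := by positivity
  have hint1 : Continuous fun s => p.Gam s t * Real.exp (p.F * (t - s)) *
      ((p.zeta 0 * p.x0 + p.tau x1 0) * p.Th1 s * Real.exp (p.C * s) -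
        p.B ^ 2 / p.R * p.gam x1 s) := by
    apply (hcGl.mul (by fun_prop)).mul
    exact (((continuous_const.mul hc1).mul (by fun_prop)).sub (continuous_const.mul hg1))
  have hint2 : Continuous fun s => p.Gam s t * Real.exp (p.F * (t - s)) *
      ((p.zeta 0 * p.x0 + p.tau x2 0) * p.Th1 s * Real.exp (p.C * s) -
        p.B ^ 2 / p.R * p.gam x2 s) := by
    apply (hcGl.mul (by fun_prop)).mul
    exact (((continuous_const.mul hc1).mul (by fun_prop)).sub (continuous_const.mul hg2))
  have hsplit : p.Tmap x1 t - p.Tmap x2 t = ∫ s in (0:ℝ)..t,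
      p.Gam s t * Real.exp (p.F * (t - s)) *
        ((p.tau x1 0 - p.tau x2 0) * p.Th1 s * Real.exp (p.C * s) -
          p.B ^ 2 / p.R * (p.gam x1 s - p.gam x2 s)) := by
    unfold Tmap
    rw [add_sub_add_left_eq_sub,
      ← intervalIntegral.integral_sub (hint1.intervalIntegrable _ _)
        (hint2.intervalIntegrable _ _)]
    apply intervalIntegral.integral_congr
    intro s _
    dsimp only
    ring
  rw [hsplit]
  have hintc : Continuous fun s => p.Gam s t * Real.exp (p.F * (t - s)) *
      ((p.tau x1 0 - p.tau x2 0) * p.Th1 s * Real.exp (p.C * s) -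
        p.B ^ 2 / p.R * (p.gam x1 s - p.gam x2 s)) := by
    apply (hcGl.mul (by fun_prop)).mul
    exact ((continuous_const.mul hc1).mul (by fun_prop)).sub
      (continuous_const.mul (hg1.sub hg2))
  calc |∫ s in (0:ℝ)..t, p.Gam s t * Real.exp (p.F * (t - s)) *
        ((p.tau x1 0 - p.tau x2 0) * p.Th1 s * Real.exp (p.C * s) -
          p.B ^ 2 / p.R * (p.gam x1 s - p.gam x2 s))|
      ≤ ∫ s in (0:ℝ)..t, |p.Gam s t * Real.exp (p.F * (t - s)) *
          ((p.tau x1 0 - p.tau x2 0) * p.Th1 s * Real.exp (p.C * s) -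
            p.B ^ 2 / p.R * (p.gam x1 s - p.gam x2 s))| :=
        intervalIntegral.abs_integral_le_integral_abs ht.1
    _ ≤ ∫ s in (0:ℝ)..t, (E1 * |p.Th1 s| + E2) := by
        apply intervalIntegral.integral_mono_on ht.1
          (hintc.abs.intervalIntegrable _ _)
          (((continuous_const.mul hc1.abs).add continuous_const).intervalIntegrable _ _)
        intro s hs
        have hs' : s ∈ Set.Icc 0 p.T := ⟨hs.1, hs.2.trans ht.2⟩
        have hF : |Real.exp (p.F * (t - s))| ≤ Real.exp (|p.F| * p.T) := by
          apply abs_exp_le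
          calc p.F * (t - s) ≤ |p.F * (t - s)| := le_abs_self _
            _ = |p.F| * |t - s| := abs_mul _ _
            _ ≤ |p.F| * p.T := by
                apply mul_le_mul_of_nonneg_left _ (abs_nonneg _)
                rw [abs_of_nonneg (by linarith [hs.2] : (0:ℝ) ≤ t - s)]
                linarith [ht.2, hs.1]
        have hCs : |Real.exp (p.C * s)| ≤ Real.exp (|p.C| * p.T) := by
          apply abs_exp_le
          calc p.C * s ≤ |p.C * s| := le_abs_self _
            _ = |p.C| * s := by rw [abs_mul, abs_of_nonneg hs'.1]
            _ ≤ |p.C| * p.T := mul_le_mul_of_nonneg_left hs'.2 (abs_nonneg _)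
        have hX : |(p.tau x1 0 - p.tau x2 0) * p.Th1 s * Real.exp (p.C * s) -
            p.B ^ 2 / p.R * (p.gam x1 s - p.gam x2 s)|
            ≤ Dt * |p.Th1 s| * Real.exp (|p.C| * p.T) + p.B ^ 2 / p.R * Dg := by
          apply (abs_sub _ _).trans
          apply add_le_add
          · exact abs_mul3_le htaub le_rfl hCs
          · rw [abs_mul, abs_of_nonneg hBR]
            exact mul_le_mul_of_nonneg_left
              (p.gam_diff hT hQ hR hB h1 h2 hd0 hd hs') hBR
        calc |p.Gam s t * Real.exp (p.F * (t - s)) *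
              ((p.tau x1 0 - p.tau x2 0) * p.Th1 s * Real.exp (p.C * s) -
                p.B ^ 2 / p.R * (p.gam x1 s - p.gam x2 s))|
            ≤ p.GamBar * Real.exp (|p.F| * p.T) *
              (Dt * |p.Th1 s| * Real.exp (|p.C| * p.T) + p.B ^ 2 / p.R * Dg) :=
              abs_mul3_le (p.abs_Gam_le hT hQ hR hB hs' ht) hF hX
          _ = E1 * |p.Th1 s| + E2 := by rw [hE1, hE2]; ring
    _ = E1 * (∫ s in (0:ℝ)..t, |p.Th1 s|) + (t - 0) * E2 := by
        rw [intervalIntegral.integral_add (f := fun s => E1 * |p.Th1 s|)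
          ((continuous_const.mul hc1.abs).intervalIntegrable _ _)
          intervalIntegrable_const, intervalIntegral.integral_const_mul,
          intervalIntegral.integral_const, smul_eq_mul]
    _ ≤ E1 * p.ThBar1 + p.T * E2 := by
        apply add_le_add
        · apply mul_le_mul_of_nonneg_left _ hE10
          exact intervalIntegral.integral_mono_interval le_rfl ht.1 ht.2
            (Filter.Eventually.of_forall fun x => abs_nonneg _)
            (hc1.abs.intervalIntegrable _ _)
        · apply mul_le_mul_of_nonneg_right _ hE20
          linarith [ht.2]
    _ = (Real.exp ((2 * |p.C| + |p.F|) * p.T) * p.GamBar ^ 2 * p.ThBar1 * p.ThBar2 * p.ThBar3 +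
        Real.exp ((2 * |p.C| + |p.F|) * p.T) * p.GamBar * p.ThBar1 * p.ThBar4 +
        Real.exp (|p.F| * p.T) * (p.B ^ 2 / p.R) * p.T * p.GamBar ^ 2 * p.ThBar3) * d := by
        have hexp : Real.exp ((2 * |p.C| + |p.F|) * p.T)
            = Real.exp (|p.C| * p.T) * Real.exp (|p.C| * p.T) * Real.exp (|p.F| * p.T) := by
          rw [← Real.exp_add, ← Real.exp_add]
          congr 1; ring
        rw [hE1, hE2, hDt, hDg, hexp]
        ring

end Hyps6

end P

/-- under condition (H2), the map `𝒯 : C([0,T];ℝ) → C([0,T];ℝ)` has a unique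
fixed point. -/
theorem Tmap_unique_fixed_point (p : P) (hT : 0 < p.T) (hQ : 0 < p.Q) (hR : 0 < p.R)
    (hB : p.B ≠ 0) (hN0 : 0 ≤ p.N0)
    (hH2 : Real.exp ((2 * |p.C| + |p.F|) * p.T) * p.GamBar ^ 2 * p.ThBar1 * p.ThBar2 * p.ThBar3 +
        Real.exp ((2 * |p.C| + |p.F|) * p.T) * p.GamBar * p.ThBar1 * p.ThBar4 +
        Real.exp (|p.F| * p.T) * (p.B ^ 2 / p.R) * p.T * p.GamBar ^ 2 * p.ThBar3 < 1) :
    ∃ xb : ℝ → ℝ, ContinuousOn xb (Set.Icc 0 p.T) ∧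
      (∀ t ∈ Set.Icc 0 p.T, p.Tmap xb t = xb t) ∧
      ∀ yb : ℝ → ℝ, ContinuousOn yb (Set.Icc 0 p.T) →
        (∀ t ∈ Set.Icc 0 p.T, p.Tmap yb t = yb t) →
        ∀ t ∈ Set.Icc 0 p.T, yb t = xb t := by
  set κ : ℝ :=
    Real.exp ((2 * |p.C| + |p.F|) * p.T) * p.GamBar ^ 2 * p.ThBar1 * p.ThBar2 * p.ThBar3 +
      Real.exp ((2 * |p.C| + |p.F|) * p.T) * p.GamBar * p.ThBar1 * p.ThBar4 +
      Real.exp (|p.F| * p.T) * (p.B ^ 2 / p.R) * p.T * p.GamBar ^ 2 * p.ThBar3 with hκ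
  have hGB := p.GamBar_pos
  have hT1 := p.ThBar1_nonneg hT hQ hR hB
  have hT2 := p.ThBar2_nonneg hT hQ hR hB
  have hT3 := p.ThBar3_nonneg hT hQ hR hB
  have hT4 := p.ThBar4_nonneg hT hQ hR hB
  have hBR : (0:ℝ) ≤ p.B ^ 2 / p.R := div_nonneg (sq_nonneg _) hR.le
  have hG2 : (0:ℝ) ≤ p.GamBar ^ 2 := sq_nonneg _
  have he1 := (Real.exp_pos ((2 * |p.C| + |p.F|) * p.T)).le
  have he2 := (Real.exp_pos (|p.F| * p.T)).le
  have hκ0 : 0 ≤ κ := by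
    have s1 : (0:ℝ) ≤ Real.exp ((2 * |p.C| + |p.F|) * p.T) * p.GamBar ^ 2 * p.ThBar1 *
        p.ThBar2 * p.ThBar3 :=
      mul_nonneg (mul_nonneg (mul_nonneg (mul_nonneg he1 hG2) hT1) hT2) hT3
    have s2 : (0:ℝ) ≤ Real.exp ((2 * |p.C| + |p.F|) * p.T) * p.GamBar * p.ThBar1 * p.ThBar4 :=
      mul_nonneg (mul_nonneg (mul_nonneg he1 hGB.le) hT1) hT4
    have s3 : (0:ℝ) ≤ Real.exp (|p.F| * p.T) * (p.B ^ 2 / p.R) * p.T * p.GamBar ^ 2 * p.ThBar3 :=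
      mul_nonneg (mul_nonneg (mul_nonneg (mul_nonneg he2 hBR) hT.le) hG2) hT3
    rw [hκ]; linarith
  let ext : C(Set.Icc 0 p.T, ℝ) → ℝ → ℝ := fun f t => f (Set.projIcc 0 p.T hT.le t)
  have cont_ext : ∀ f, Continuous (ext f) := fun f => f.continuous.comp continuous_projIcc
  have ext_eq : ∀ f t (ht : t ∈ Set.Icc 0 p.T), ext f t = f ⟨t, ht⟩ := by
    intro f t ht
    simp only [ext, Set.projIcc_of_mem hT.le ht]
  let Φ : C(Set.Icc 0 p.T, ℝ) → C(Set.Icc 0 p.T, ℝ) := fun f =>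
    ⟨fun u => p.Tmap (ext f) u.1,
      (p.cont_Tmap hQ hR hB (cont_ext f)).comp continuous_subtype_val⟩
  have hdist : ∀ f g : C(Set.Icc 0 p.T, ℝ), dist (Φ f) (Φ g) ≤ κ * dist f g := by
    intro f g
    rw [ContinuousMap.dist_le (mul_nonneg hκ0 dist_nonneg)]
    intro u
    have hd : ∀ v ∈ Set.Icc 0 p.T, |ext f v - ext g v| ≤ dist f g := by
      intro v hv
      rw [ext_eq f v hv, ext_eq g v hv]
      have h := ContinuousMap.dist_apply_le_dist (f := f) (g := g) (⟨v, hv⟩ : Set.Icc 0 p.T)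
      rwa [Real.dist_eq] at h
    have hb := p.Tmap_diff hT hQ hR hB (cont_ext f) (cont_ext g) dist_nonneg hd u.2
    show dist (p.Tmap (ext f) u.1) (p.Tmap (ext g) u.1) ≤ κ * dist f g
    rw [Real.dist_eq, hκ]
    exact hb
  have hcontr : ContractingWith ⟨κ, hκ0⟩ Φ :=
    ⟨by exact_mod_cast hH2, LipschitzWith.of_dist_le_mul hdist⟩
  let f0 := ContractingWith.fixedPoint Φ hcontr
  have hfix : Φ f0 = f0 := hcontr.fixedPoint_isFixedPt
  refine ⟨ext f0, (cont_ext f0).continuousOn, ?_, ?_⟩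
  · intro t htI
    calc p.Tmap (ext f0) t = (Φ f0) ⟨t, htI⟩ := rfl
      _ = f0 ⟨t, htI⟩ := by rw [hfix]
      _ = ext f0 t := (ext_eq f0 t htI).symm
  · intro yb hyc hyfix t htI
    let fy : C(Set.Icc 0 p.T, ℝ) := ⟨fun u => yb u.1, by
      exact continuousOn_iff_continuous_restrict.mp hyc⟩
    have hext_eqOn : Set.EqOn (ext fy) yb (Set.Icc 0 p.T) := by
      intro v hv
      rw [ext_eq fy v hv]
      rfl
    have hfy : Function.IsFixedPt Φ fy := by
      apply ContinuousMap.ext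
      intro u
      show p.Tmap (ext fy) u.1 = yb u.1
      rw [p.Tmap_congr hT hext_eqOn u.2]
      exact hyfix u.1 u.2
    have hfyf0 : fy = f0 := hcontr.fixedPoint_unique hfy
    calc yb t = fy ⟨t, htI⟩ := rfl
      _ = f0 ⟨t, htI⟩ := by rw [hfyf0]
      _ = ext f0 t := (ext_eq f0 t htI).symm

end
end

section
/- Suppose B ≠ 0, Q > 0 and N₀ ≥ 0, and let x̄ : [0,T] → ℝ be continuous. Then the function y := 𝒯x̄ is differentiable on [0,T] and satisfies the linear ODE y′(t) = (𝔸(t) + F)y(t) + (ζ(0)x₀ + τ[x̄](0))Θ₁(t)e^{Ct} − (B²/R)γ[x̄](t) for all t ∈ [0,T], with initial condition y(0) = x₀. -/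
open Real Set

noncomputable section

open MeasureTheory intervalIntegral

namespace TmapAux

lemma prim_hasDerivAt {f : ℝ → ℝ} (hf : Continuous f) (t : ℝ) :
    HasDerivAt (fun u => ∫ v in (0:ℝ)..u, f v) (f t) t :=
  intervalIntegral.integral_hasDerivAt_right (hf.intervalIntegrable 0 t)
    (hf.stronglyMeasurableAtFilter _ _) hf.continuousAt

lemma continuous_prim {f : ℝ → ℝ} (hf : Continuous f) :
    Continuous fun u => ∫ v in (0:ℝ)..u, f v :=
  continuous_iff_continuousAt.mpr fun t => (prim_hasDerivAt hf t).continuousAt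

lemma continuous_int_right {f : ℝ → ℝ} (hf : Continuous f) (T : ℝ) :
    Continuous fun t => ∫ v in t..T, f v := by
  have h : (fun t => ∫ v in t..T, f v)
      = fun t => (∫ v in (0:ℝ)..T, f v) - ∫ v in (0:ℝ)..t, f v := by
    funext t
    rw [eq_sub_iff_add_eq, add_comm,
      intervalIntegral.integral_add_adjacent_intervals (hf.intervalIntegrable 0 t)
        (hf.intervalIntegrable t T)]
  rw [h]
  exact continuous_const.sub (continuous_prim hf)

lemma contOn_int_right {f : ℝ → ℝ} {T : ℝ} (hT : 0 ≤ T)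
    (hf : ContinuousOn f (Icc 0 T)) :
    ContinuousOn (fun t => ∫ v in t..T, f v) (Icc 0 T) := by
  have hint : IntegrableOn f (Icc 0 T) := hf.integrableOn_compact isCompact_Icc
  have heq : ∀ t ∈ Icc 0 T, (∫ v in t..T, f v)
      = (∫ v in (0:ℝ)..T, f v) - ∫ v in (0:ℝ)..t, f v := by
    intro t ht
    rw [eq_sub_iff_add_eq, add_comm,
      intervalIntegral.integral_add_adjacent_intervals]
    · exact (hint.mono_set (by rw [uIcc_of_le ht.1]; exact Icc_subset_Icc le_rfl ht.2)).intervalIntegrable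
    · exact (hint.mono_set (by rw [uIcc_of_le ht.2]; exact Icc_subset_Icc ht.1 le_rfl)).intervalIntegrable
  refine ContinuousOn.congr ?_ heq
  refine continuousOn_const.sub ?_
  have := intervalIntegral.continuousOn_primitive_interval
    (a := (0:ℝ)) (b := T) (μ := volume) (f := f) (by rwa [uIcc_of_le hT])
  rwa [uIcc_of_le hT] at this

lemma prim_hasDerivWithinAt {f : ℝ → ℝ} {T : ℝ} (hf : ContinuousOn f (Icc 0 T))
    {t : ℝ} (ht : t ∈ Icc 0 T) :
    HasDerivWithinAt (fun u => ∫ v in (0:ℝ)..u, f v) (f t) (Icc 0 T) t := by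
  haveI : Fact (t ∈ Icc 0 T) := ⟨ht⟩
  refine intervalIntegral.integral_hasDerivWithinAt_right ?_
    (hf.stronglyMeasurableAtFilter_nhdsWithin measurableSet_Icc t) (hf t ht)
  exact ((hf.integrableOn_compact isCompact_Icc).mono_set
    (by rw [uIcc_of_le ht.1]; exact Icc_subset_Icc le_rfl ht.2)).intervalIntegrable

end TmapAux

open TmapAux

/-- for continuous `x̄`, the function `y := 𝒯x̄` is differentiable on `[0,T]`
and satisfies `y′(t) = (𝔸(t) + F)y(t) + (ζ(0)x₀ + τ[x̄](0))Θ₁(t)e^{Ct} − (B²/R)γ[x̄](t)`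
with `y(0) = x₀`. -/
theorem Tmap_solves_ode (p : P) (hT : 0 < p.T) (hQ : 0 < p.Q) (hR : 0 < p.R)
    (hB : p.B ≠ 0) (hN0 : 0 ≤ p.N0) (xb : ℝ → ℝ)
    (hxb : ContinuousOn xb (Set.Icc 0 p.T)) :
    DifferentiableOn ℝ (p.Tmap xb) (Set.Icc 0 p.T) ∧
      (∀ t ∈ Set.Icc 0 p.T,
        derivWithin (p.Tmap xb) (Set.Icc 0 p.T) t =
          (p.AA t + p.F) * p.Tmap xb t +
            (p.zeta 0 * p.x0 + p.tau xb 0) * p.Th1 t * Real.exp (p.C * t) -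
            p.B ^ 2 / p.R * p.gam xb t) ∧
      p.Tmap xb 0 = p.x0 := by
  -- continuity of β and 𝔸
  have hlam : |p.a| < p.lam := by
    have h1 : 0 < p.B ^ 2 * p.Q / p.R := by positivity
    have h2 : p.a ^ 2 < p.a ^ 2 + p.B ^ 2 * p.Q / p.R := by linarith
    calc |p.a| = Real.sqrt (p.a ^ 2) := (Real.sqrt_sq_eq_abs _).symm
      _ < p.lam := Real.sqrt_lt_sqrt (sq_nonneg _) h2
  obtain ⟨hl1, hl2⟩ := abs_lt.mp hlam
  have hden : ∀ t : ℝ, 0 < (p.lam - p.a) * Real.exp (2 * p.lam * (p.T - t)) + (p.lam + p.a) := by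
    intro t
    have h1 : 0 < p.lam - p.a := by linarith
    have h2 : 0 < p.lam + p.a := by linarith
    positivity
  have hbeta : Continuous p.beta := by
    unfold P.beta
    exact (continuous_const.mul (by fun_prop)).div (by fun_prop) fun t => (hden t).ne'
  have hAA : Continuous p.AA := continuous_const.sub (continuous_const.mul hbeta)
  set I : ℝ → ℝ := fun t => ∫ r in (0:ℝ)..t, p.AA r with hIdef
  have hI : ∀ t, HasDerivAt I (p.AA t) t := prim_hasDerivAt hAA
  have hIc : Continuous I := continuous_prim hAA
  have hI0 : I 0 = 0 := intervalIntegral.integral_same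
  have hGam : ∀ s t : ℝ, p.Gam s t = Real.exp (I t - I s) := by
    intro s t
    unfold P.Gam
    congr 1
    have := intervalIntegral.integral_add_adjacent_intervals
      (hAA.intervalIntegrable (μ := volume) 0 s) (hAA.intervalIntegrable (μ := volume) s t)
    simp only [hIdef]
    linarith
  -- continuity of α, ζ, Θ₁
  have hTh6 : Continuous p.Th6 := ((continuous_const.mul hbeta).sub continuous_const : _)
  have halphaEq : ∀ t, p.alpha t = Real.exp (-(p.C * t) - I t) *
      (-p.K * Real.exp (p.C * p.T + I p.T) +
        ∫ v in t..p.T, Real.exp (p.C * v + I v) * p.Th6 v) := by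
    intro t
    unfold P.alpha
    have h1 : ∀ v, Real.exp (p.C * (v - t)) * p.Gam t v * p.Th6 v
        = Real.exp (-(p.C * t) - I t) * (Real.exp (p.C * v + I v) * p.Th6 v) := by
      intro v
      rw [hGam, ← Real.exp_add, ← mul_assoc, ← Real.exp_add,
        show p.C * (v - t) + (I v - I t) = -(p.C * t) - I t + (p.C * v + I v) by ring]
    simp only [h1]
    rw [intervalIntegral.integral_const_mul, mul_add]
    congr 1
    rw [hGam, show Real.exp (-(p.C * t) - I t) * (-p.K * Real.exp (p.C * p.T + I p.T))
        = -p.K * (Real.exp (-(p.C * t) - I t) * Real.exp (p.C * p.T + I p.T)) by ring,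
      ← Real.exp_add,
      show -(p.C * t) - I t + (p.C * p.T + I p.T) = p.C * (p.T - t) + (I p.T - I t) by ring,
      Real.exp_add, ← mul_assoc]
  have halphac : Continuous p.alpha := by
    rw [show p.alpha = fun t => Real.exp (-(p.C * t) - I t) *
        (-p.K * Real.exp (p.C * p.T + I p.T) +
          ∫ v in t..p.T, Real.exp (p.C * v + I v) * p.Th6 v) from funext halphaEq]
    have hw : Continuous fun v => Real.exp (p.C * v + I v) * p.Th6 v := by fun_prop
    exact (Real.continuous_exp.comp (by fun_prop)).mul
      (continuous_const.add (continuous_int_right hw p.T))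
  have hTh1 : Continuous p.Th1 := by
    unfold P.Th1
    exact (((continuous_const.mul halphac).sub continuous_const).mul continuous_const).div_const _
  -- γ[xb]
  have hTh3 : Continuous p.Th3 := ((continuous_const.mul hbeta).sub continuous_const : _)
  have hgamEq : ∀ t, p.gam xb t = Real.exp (-(I t)) *
      ∫ v in t..p.T, Real.exp (I v) * (p.Th3 v * xb v - p.Q * p.eta) := by
    intro t
    unfold P.gam
    have h1 : ∀ v, p.Gam t v * (p.Th3 v * xb v - p.Q * p.eta)
        = Real.exp (-(I t)) * (Real.exp (I v) * (p.Th3 v * xb v - p.Q * p.eta)) := by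
      intro v
      rw [hGam, ← mul_assoc, ← Real.exp_add, show -(I t) + I v = I v - I t by ring]
    simp only [h1]
    rw [intervalIntegral.integral_const_mul]
  have hw2 : ContinuousOn (fun v => Real.exp (I v) * (p.Th3 v * xb v - p.Q * p.eta))
      (Set.Icc 0 p.T) :=
    (Real.continuous_exp.comp hIc).continuousOn.mul
      ((hTh3.continuousOn.mul hxb).sub continuousOn_const)
  have hgamc : ContinuousOn (p.gam xb) (Set.Icc 0 p.T) := by
    refine ContinuousOn.congr ?_ fun t _ => hgamEq t
    exact (Real.continuous_exp.comp hIc.neg).continuousOn.mul (contOn_int_right hT.le hw2)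
  -- the forcing term and the exponential reformulation of Tmap
  set c : ℝ := p.zeta 0 * p.x0 + p.tau xb 0 with hc
  set g : ℝ → ℝ := fun s => c * p.Th1 s * Real.exp (p.C * s) - p.B ^ 2 / p.R * p.gam xb s
    with hg
  set h : ℝ → ℝ := fun s => Real.exp (-(I s) - p.F * s) * g s with hh
  set E : ℝ → ℝ := fun t => Real.exp (I t + p.F * t) with hE
  have hgc : ContinuousOn g (Set.Icc 0 p.T) :=
    (((continuous_const.mul hTh1).mul (by fun_prop)).continuousOn).sub
      (continuousOn_const.mul hgamc)
  have hhc : ContinuousOn h (Set.Icc 0 p.T) :=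
    (Real.continuous_exp.comp (by fun_prop : Continuous fun s => -(I s) - p.F * s)).continuousOn.mul hgc
  have hkey : ∀ t, p.Tmap xb t = E t * (p.x0 + ∫ s in (0:ℝ)..t, h s) := by
    intro t
    unfold P.Tmap
    have h1 : ∀ s, p.Gam s t * Real.exp (p.F * (t - s)) *
        ((p.zeta 0 * p.x0 + p.tau xb 0) * p.Th1 s * Real.exp (p.C * s)
          - p.B ^ 2 / p.R * p.gam xb s) = E t * h s := by
      intro s
      simp only [hGam, hh, hg, hE, hc]
      rw [← mul_assoc, ← Real.exp_add, ← Real.exp_add,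
        show I t - I s + p.F * (t - s) = I t + p.F * t + (-I s - p.F * s) by ring]
    simp only [h1]
    rw [intervalIntegral.integral_const_mul, hGam, hI0, hE]
    simp only
    rw [← Real.exp_add, sub_zero]
    ring
  have hEd : ∀ t, HasDerivAt E ((p.AA t + p.F) * E t) t := by
    intro t
    have h1 : HasDerivAt (fun u => I u + p.F * u) (p.AA t + p.F) t := by
      simpa using (hI t).fun_add ((hasDerivAt_id t).const_mul p.F)
    simpa [hE, mul_comm] using h1.exp
  have hEh : ∀ t, E t * h t = g t := by
    intro t
    simp only [hh, hE]
    rw [← mul_assoc, ← Real.exp_add,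
      show I t + p.F * t + (-I t - p.F * t) = 0 by ring, Real.exp_zero, one_mul]
  have hy : ∀ t ∈ Set.Icc 0 p.T, HasDerivWithinAt (p.Tmap xb)
      ((p.AA t + p.F) * p.Tmap xb t + g t) (Set.Icc 0 p.T) t := by
    intro t ht
    have hJ : HasDerivWithinAt (fun u => p.x0 + ∫ s in (0:ℝ)..u, h s) (h t)
        (Set.Icc 0 p.T) t := by
      simpa using (prim_hasDerivWithinAt hhc ht).const_add p.x0
    have := ((hEd t).hasDerivWithinAt.fun_mul hJ)
    rw [show (fun t => E t * (p.x0 + ∫ s in (0:ℝ)..t, h s)) = p.Tmap xb from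
      (funext hkey).symm] at this
    refine HasDerivWithinAt.congr_deriv this ?_
    rw [hkey t, hEh t]
    ring
  refine ⟨fun t ht => (hy t ht).differentiableWithinAt, fun t ht => ?_, ?_⟩
  · rw [(hy t ht).derivWithin ((uniqueDiffOn_Icc hT) t ht)]
    simp only [hg, hc]
    ring
  · unfold P.Tmap
    simp [P.Gam]


end
end
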